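/- Let ξ ∈ ℝ² be nonzero and let h be a symmetric 3×3 real matrix (indices 0,1,2) satisfying: (a) 2|ξ|h_{0k} − 2i·Σⱼ ξⱼ h_{jk} + i·ξ_k·tr h = 0 for k = 1,2; (b) 2|ξ|h_{00} − 2i·Σ_k ξ_k h_{0k} − |ξ|·tr h = 0; (c) h_{kl} = φ·δ_{kl} for k,l ∈ {1,2} and some scalar φ; (d) |ξ|·Σ_k h_{kk} + 2i·Σ_k ξ_k h_{0k} = 0. Then h = 0. -/
import Mathlib


open Complex

/-- Ellipticity of the boundary conditions for the Bianchi-gauged Einstein operator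
(Proposition 2.1): let `ξ = (ξ₁, ξ₂) ≠ 0` be a nonzero real covector with norm
`n = |ξ|`, and let `h` be a symmetric `3×3` complex matrix (index `0` the normal
direction) satisfying the symbol equations at the root `z = i|ξ|`:
(a) `2|ξ|h₀ₖ − 2i Σⱼ ξⱼ hⱼₖ + i ξₖ tr h = 0` for `k = 1,2`;
(b) `2|ξ|h₀₀ − 2i Σₖ ξₖ h₀ₖ − |ξ| tr h = 0`;
(c) `hₖₗ = φ δₖₗ` for `k,l ∈ {1,2}`;
(d) `|ξ| Σₖ hₖₖ + 2i Σₖ ξₖ h₀ₖ = 0`.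
Then `h = 0`. -/
theorem stmt_9 (ξ₁ ξ₂ : ℝ) (hξ : (ξ₁, ξ₂) ≠ (0, 0))
    (h : Matrix (Fin 3) (Fin 3) ℂ) (hsym : h.IsSymm) (φ : ℂ) :
    let n : ℝ := Real.sqrt (ξ₁ ^ 2 + ξ₂ ^ 2)
    let trh : ℂ := h 0 0 + h 1 1 + h 2 2
    (2 * (n : ℂ) * h 0 1 - 2 * I * ((ξ₁ : ℂ) * h 1 1 + (ξ₂ : ℂ) * h 2 1)
        + I * (ξ₁ : ℂ) * trh = 0) →
    (2 * (n : ℂ) * h 0 2 - 2 * I * ((ξ₁ : ℂ) * h 1 2 + (ξ₂ : ℂ) * h 2 2)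
        + I * (ξ₂ : ℂ) * trh = 0) →
    (2 * (n : ℂ) * h 0 0 - 2 * I * ((ξ₁ : ℂ) * h 0 1 + (ξ₂ : ℂ) * h 0 2)
        - (n : ℂ) * trh = 0) →
    (h 1 1 = φ ∧ h 2 2 = φ ∧ h 1 2 = 0 ∧ h 2 1 = 0) →
    ((n : ℂ) * (h 1 1 + h 2 2) + 2 * I * ((ξ₁ : ℂ) * h 0 1 + (ξ₂ : ℂ) * h 0 2) = 0) →
    h = 0 := by
  intro n trh e1 e2 e3 hc e4
  obtain ⟨c1, c2, c3, c4⟩ := hc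
  have hpos : (0:ℝ) < ξ₁ ^ 2 + ξ₂ ^ 2 := by
    have : ξ₁ ≠ 0 ∨ ξ₂ ≠ 0 := by
      by_contra hcon
      push_neg at hcon
      exact hξ (by simp [hcon.1, hcon.2])
    rcases this with h1 | h2 <;> positivity
  have hn : (n : ℂ) ≠ 0 := by
    simp only [n, Ne, Complex.ofReal_eq_zero]
    exact ne_of_gt (Real.sqrt_pos.mpr hpos)
  have h2n : (2 * (n:ℂ)) ≠ 0 := mul_ne_zero two_ne_zero hn
  simp only [trh] at e1 e2 e3
  rw [c1, c2] at e1 e2 e3 e4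
  rw [c3] at e2
  rw [c4] at e1
  have h00 : h 0 0 = 0 := by
    apply mul_left_cancel₀ hn
    linear_combination e3 + e4
  rw [h00] at e1 e2 e3
  have h01 : h 0 1 = 0 := by
    apply mul_left_cancel₀ h2n
    linear_combination e1
  have h02 : h 0 2 = 0 := by
    apply mul_left_cancel₀ h2n
    linear_combination e2
  rw [h01, h02] at e4
  have hφ : φ = 0 := by
    apply mul_left_cancel₀ h2n
    linear_combination e4
  have h10 : h 1 0 = 0 := by rw [← hsym.apply 1 0]; simpa using h01
  have h20 : h 2 0 = 0 := by rw [← hsym.apply 2 0]; simpa using h02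
  ext i j
  fin_cases i <;> fin_cases j <;>
    simp_all [h00, h01, h02, h10, h20, c1, c2, c3, c4, hφ]
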